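/- arXiv:1808.03938 — 8 statements merged into one kernel-verified Lean document; each statement's English description precedes it below -/
import Mathlib

section
/- Every square-free non-degenerate braided set (X,r) satisfies the cyclic condition cl1: λ_{ρ_x(y)}(x) = λ_y(x) for all x, y ∈ X (where r(x,y) = (λ_x(y), ρ_y(x))). -/
def Nondegenerate {X : Type*} (r : X × X ≃ X × X) : Prop :=
  (∀ x : X, Function.Bijective fun y : X => (r (x, y)).1) ∧
  (∀ y : X, Function.Bijective fun x : X => (r (x, y)).2)

def SquareFree' {X : Type*} (r : X × X ≃ X × X) : Prop :=
  ∀ x : X, r (x, x) = (x, x)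

/-- `r¹² = r × id` on `X³`. -/
def r12 {X : Type*} (r : X × X ≃ X × X) (t : X × X × X) : X × X × X :=
  ((r (t.1, t.2.1)).1, (r (t.1, t.2.1)).2, t.2.2)

/-- `r²³ = id × r` on `X³`. -/
def r23 {X : Type*} (r : X × X ≃ X × X) (t : X × X × X) : X × X × X :=
  (t.1, r (t.2.1, t.2.2))

/-- `(X, r)` is a braided set: the braid relation holds on `X³`. -/
def Braided {X : Type*} (r : X × X ≃ X × X) : Prop :=
  ∀ t : X × X × X, r12 r (r23 r (r12 r t)) = r23 r (r12 r (r23 r t))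

/-- cl1: `^{(y^x)}x = ^y x`. -/
theorem stmt_7 {X : Type*} (r : X × X ≃ X × X)
    (hnd : Nondegenerate r) (hsf : SquareFree' r) (hbr : Braided r) :
    ∀ x y : X, (r ((r (y, x)).2, x)).1 = (r (y, x)).1 := by
  intro x y
  have hb := hbr (y, x, x)
  simp only [r12, r23, hsf x] at hb
  have h1 := congrArg Prod.fst hb
  simp only at h1
  have hsq : (r ((r (y, x)).1, (r (y, x)).1)).1 = (r (y, x)).1 := by
    rw [hsf]
  exact (hnd.1 (r (y, x)).1).1 (h1.trans hsq.symm)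
end

section
/- Every square-free non-degenerate braided set (X,r) satisfies the cyclic condition cr1: ρ_{λ_x(y)}(x) = ρ_y(x) for all x, y ∈ X, i.e. x^{(^x y)} = x^y. -/
/-- cr1: `x^{(^x y)} = x^y`. -/
theorem stmt_8 {X : Type*} (r : X × X ≃ X × X)
    (hnd : Nondegenerate r) (hsf : SquareFree' r) (hbr : Braided r) :
    ∀ x y : X, (r (x, (r (x, y)).1)).2 = (r (x, y)).2 := by
  intro x y
  have h := hbr (x, x, y)
  simp only [r12, r23, hsf x] at h
  -- middle component of the braid relation at (x, x, y)
  have h2 : (r (x, (r (x, y)).1)).2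
      = (r ((r (x, (r (x, y)).1)).2, (r (x, y)).2)).1 :=
    congrArg (fun t : X × X × X => t.2.1) h
  set u := (r (x, (r (x, y)).1)).2 with hu
  have huu : (r (u, u)).1 = u := by rw [hsf u]
  have := (hnd.1 u).1 (a₁ := u) (a₂ := (r (x, y)).2) (by
    simpa [huu] using h2)
  exact this ▸ rfl
end

section
/- Let (X,r) be a non-degenerate quadratic set satisfying the cyclic conditions cl1 (^{(y^x)}x = ^y x) and cr1 (x^{(^x y)} = x^y) for all x,y ∈ X. Then r is involutive if and only if condition lri holds: (^x y)^x = y and ^x(y^x) = y for all x, y ∈ X. -/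
/-- cl1: `^{(y^x)}x = ^y x` for all `x, y`. -/
def CL1 {X : Type*} (r : X × X ≃ X × X) : Prop :=
  ∀ x y : X, (r ((r (y, x)).2, x)).1 = (r (y, x)).1

/-- cr1: `x^{(^x y)} = x^y` for all `x, y`. -/
def CR1 {X : Type*} (r : X × X ≃ X × X) : Prop :=
  ∀ x y : X, (r (x, (r (x, y)).1)).2 = (r (x, y)).2

/-- lri: `(^x y)^x = y` and `^x (y^x) = y` for all `x, y`. -/
def LRI {X : Type*} (r : X × X ≃ X × X) : Prop :=
  ∀ x y : X, (r ((r (x, y)).1, x)).2 = y ∧ (r (x, (r (y, x)).2)).1 = y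

theorem stmt_9 {X : Type*} (r : X × X ≃ X × X)
    (hnd : Nondegenerate r) (hcl1 : CL1 r) (hcr1 : CR1 r) :
    (∀ p : X × X, r (r p) = p) ↔ LRI r := by
  constructor
  · intro h
    -- first establish lri1 : ρ_x (λ_x y) = y for all x y
    have lri1 : ∀ x y : X, (r ((r (x, y)).1, x)).2 = y := by
      intro x y
      obtain ⟨a, ha⟩ := (hnd.2 y).2 x
      simp only at ha
      -- ha : (r (a, y)).2 = x
      have hc := hcl1 y a
      -- hc : (r ((r (a, y)).2, y)).1 = (r (a, y)).1
      rw [ha] at hc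
      -- hc : (r (x, y)).1 = (r (a, y)).1
      have h2 := congrArg Prod.snd (h (a, y))
      -- h2 : (r (r (a, y))).2 = y
      have hrw : r (a, y) = ((r (a, y)).1, (r (a, y)).2) := by ext <;> rfl
      rw [hrw, ha, ← hc] at h2
      exact h2
    intro x y
    refine ⟨lri1 x y, ?_⟩
    -- goal: (r (x, (r (y, x)).2)).1 = y  i.e. λ_x (ρ_x y) = y
    apply (hnd.2 x).1
    simp only
    exact lri1 x ((r (y, x)).2)
  · intro hlri p
    obtain ⟨x, y⟩ := p
    have hrw : r (x, y) = ((r (x, y)).1, (r (x, y)).2) := by ext <;> rfl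
    rw [hrw]
    ext
    · -- (r ((r (x,y)).1, (r (x,y)).2)).1 = x
      have hv := hcr1 x y
      -- hv : (r (x, (r (x, y)).1)).2 = (r (x, y)).2
      rw [← hv]
      exact (hlri ((r (x, y)).1) x).2
    · have hu := hcl1 y x
      -- hu : (r ((r (x, y)).2, y)).1 = (r (x, y)).1
      rw [← hu]
      exact (hlri ((r (x, y)).2) y).1
end

section
/- Let (X,r) be a quadratic set. Any two of the following three conditions imply the third: (i) r is involutive; (ii) (X,r) is non-degenerate and satisfies all four cyclic conditions cl1, cl2, cr1, cr2; (iii) (X,r) satisfies lri. -/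
/-- cl2: `^{(^x y)}x = ^y x`. -/
def CL2 {X : Type*} (r : X × X ≃ X × X) : Prop :=
  ∀ x y : X, (r ((r (x, y)).1, x)).1 = (r (y, x)).1

/-- cr2: `x^{(y^x)} = x^y`. -/
def CR2 {X : Type*} (r : X × X ≃ X × X) : Prop :=
  ∀ x y : X, (r (x, (r (y, x)).2)).2 = (r (x, y)).2

/-- (i) `r` involutive. -/
def Invol {X : Type*} (r : X × X ≃ X × X) : Prop :=
  ∀ p : X × X, r (r p) = p

/-- (ii) `(X, r)` is non-degenerate and satisfies all cyclic conditions. -/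
def NondegCyclic {X : Type*} (r : X × X ≃ X × X) : Prop :=
  Nondegenerate r ∧ CL1 r ∧ CL2 r ∧ CR1 r ∧ CR2 r

theorem stmt_10 {X : Type*} (r : X × X ≃ X × X) :
    (Invol r → NondegCyclic r → LRI r) ∧
    (Invol r → LRI r → NondegCyclic r) ∧
    (NondegCyclic r → LRI r → Invol r) := by
  refine ⟨?_, ?_, ?_⟩
  · -- Invol → NondegCyclic → LRI
    rintro hi ⟨-, hcl1, -, hcr1, hcr2⟩ x y
    have hinv : r ((r (x, y)).1, (r (x, y)).2) = (x, y) := by simpa using hi (x, y)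
    constructor
    · -- (^x y)^x = y
      have h1 : (r (x, (r (x, y)).1)).2 = (r (x, y)).2 := hcr1 x y
      have h2 : (r ((r (x, y)).1, (r (x, (r (x, y)).1)).2)).2
          = (r ((r (x, y)).1, x)).2 := hcr2 (r (x, y)).1 x
      rw [h1] at h2
      rw [← h2]
      exact congrArg Prod.snd hinv
    · -- ^x (y^x) = y
      have hinv2 : r ((r (y, x)).1, (r (y, x)).2) = (y, x) := by simpa using hi (y, x)
      have h1 : (r ((r ((r (y, x)).1, (r (y, x)).2)).2, (r (y, x)).2)).1
          = (r ((r (y, x)).1, (r (y, x)).2)).1 := hcl1 (r (y, x)).2 (r (y, x)).1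
      rw [hinv2] at h1
      exact h1
  · -- Invol → LRI → NondegCyclic
    intro hi hlri
    have hR : ∀ x y : X, (r ((r (x, y)).1, x)).2 = y := fun x y => (hlri x y).1
    have hL : ∀ x y : X, (r (x, (r (y, x)).2)).1 = y := fun x y => (hlri x y).2
    have hinv : ∀ x y : X, r ((r (x, y)).1, (r (x, y)).2) = (x, y) :=
      fun x y => by simpa using hi (x, y)
    -- injectivity helpers
    have hLinj : ∀ y a c : X, (r (a, y)).2 = (r (c, y)).2 → a = c := by
      intro y a c h
      have := hL y a
      rw [h, hL y c] at this
      exact this.symm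
    refine ⟨⟨?_, ?_⟩, ?_, ?_, ?_, ?_⟩
    · intro x
      exact Function.bijective_iff_has_inverse.2
        ⟨fun b => (r (b, x)).2, fun y => hR x y, fun b => hL x b⟩
    · intro y
      exact Function.bijective_iff_has_inverse.2
        ⟨fun b => (r (y, b)).1, fun x => hL y x, fun b => hR y b⟩
    · -- CL1
      intro x y
      have hinv2 := hinv y x
      have := hL (r (y, x)).2 (r (y, x)).1
      have hx : (r ((r (y, x)).1, (r (y, x)).2)).2 = x := congrArg Prod.snd (hinv y x)
      have h1 := hL (r (y, x)).2 (r (y, x)).1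
      rw [hx] at h1
      exact h1
    · -- CL2 : (r ((r (x,y)).1, x)).1 = (r (y,x)).1
      intro x y
      apply hLinj y
      -- (r ((r ((r (x,y)).1, x)).1, y)).2 = (r ((r (y,x)).1, y)).2
      have h1 : r ((r (x, y)).1, x) = ((r ((r (x, y)).1, x)).1, y) :=
        Prod.ext rfl (hR x y)
      have h2 : r ((r ((r (x, y)).1, x)).1, y) = ((r (x, y)).1, x) := by
        rw [← h1]; simpa using hi ((r (x, y)).1, x)
      have h3 : (r ((r ((r (x, y)).1, x)).1, y)).2 = x := congrArg Prod.snd h2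
      rw [h3, hR y x]
    · -- CR1 : (r (x, (r (x,y)).1)).2 = (r (x,y)).2
      intro x y
      have h1 : (r ((r ((r (x, y)).1, (r (x, y)).2)).1, (r (x, y)).1)).2
          = (r (x, y)).2 := hR (r (x, y)).1 (r (x, y)).2
      rw [hinv x y] at h1
      exact h1
    · -- CR2 : (r (x, (r (y,x)).2)).2 = (r (x,y)).2
      intro x y
      -- r (x, (r (y,x)).2) = (y, _) since first comp = y by hL
      set w := (r (y, x)).2 with hw
      have h1 : r (x, w) = (y, (r (x, w)).2) :=
        Prod.ext (hL x y) rfl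
      have h2 : r (y, (r (x, w)).2) = (x, w) := by
        rw [← h1]; simpa using hi (x, w)
      have h3 : (r (y, (r (x, w)).2)).1 = x := congrArg Prod.fst h2
      -- also hL y x : (r (y, (r (x,y)).2)).1 = x
      -- L_y injective: apply hR
      have h4 := hR y (r (x, w)).2
      rw [h3] at h4
      exact h4.symm
  · -- NondegCyclic → LRI → Invol
    rintro ⟨-, -, -, hcr1, hcr2⟩ hlri ⟨x, y⟩
    have hR : ∀ x y : X, (r ((r (x, y)).1, x)).2 = y := fun x y => (hlri x y).1
    have hL : ∀ x y : X, (r (x, (r (y, x)).2)).1 = y := fun x y => (hlri x y).2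
    have hb : (r (x, (r (x, y)).1)).2 = (r (x, y)).2 := hcr1 x y
    have hfst : (r ((r (x, y)).1, (r (x, y)).2)).1 = x := by
      rw [← hb]; exact hL (r (x, y)).1 x
    have hsnd : (r ((r (x, y)).1, (r (x, y)).2)).2 = y := by
      have h2 : (r ((r (x, y)).1, (r (x, (r (x, y)).1)).2)).2
          = (r ((r (x, y)).1, x)).2 := hcr2 (r (x, y)).1 x
      rw [hb] at h2
      rw [h2]
      exact hR x y
    have : r ((r (x, y)).1, (r (x, y)).2) = (x, y) := Prod.ext hfst hsnd
    simpa using this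
end

section
/- Let (X,r) be a square-free non-degenerate quadratic set. If x, y ∈ X, m ≥ 2, and the words x^m and y^m (m-fold repetitions) lie in the same orbit of the group generated by the maps r^{i,i+1} (1 ≤ i ≤ m−1) acting on X^m, then x = y. -/
/-- One application of some `r^{i,i+1}` to a word of length `m`: the group
`D_m(r)` is generated by these maps, so two words lie in the same `D_m(r)`-orbit
iff they are related by the equivalence closure `EqvGen` of this relation. -/
def Step {X : Type*} {m : ℕ} (r : X × X ≃ X × X) (f g : Fin m → X) : Prop :=
  ∃ i j : Fin m, (j : ℕ) = (i : ℕ) + 1 ∧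
    g = Function.update (Function.update f i (r (f i, f j)).1) j (r (f i, f j)).2

lemma step_const_iff {X : Type*} (r : X × X ≃ X × X) (hsf : SquareFree' r)
    {m : ℕ} {f g : Fin m → X} (h : Step r f g) (x : X) :
    f = (fun _ => x) ↔ g = (fun _ => x) := by
  obtain ⟨i, j, hij, hg⟩ := h
  have hne : i ≠ j := by
    intro e; rw [e] at hij; omega
  constructor
  · intro hf
    subst hf
    have hr : r (x, x) = (x, x) := hsf x
    subst hg
    funext k
    by_cases hk : k = j
    · subst hk; simp [Function.update, hr]
    · by_cases hk' : k = i
      · subst hk'; simp [Function.update, hk, hr]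
      · simp [Function.update, hk, hk']
  · intro hgc
    have hgk : ∀ k, g k = x := fun k => congrFun hgc k
    have hgj : g j = (r (f i, f j)).2 := by subst hg; simp [Function.update]
    have hgi : g i = (r (f i, f j)).1 := by
      subst hg; simp [Function.update, hne]
    have hr : r (f i, f j) = (x, x) := by
      have := hgk i; have := hgk j
      rw [hgi] at *; rw [hgj] at *
      exact Prod.ext ‹(r (f i, f j)).1 = x› ‹(r (f i, f j)).2 = x›
    have hfij : (f i, f j) = (x, x) := by
      apply r.injective; rw [hr, hsf]
    funext k
    by_cases hk : k = i
    · subst hk; exact (Prod.mk.injEq _ _ _ _).mp hfij |>.1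
    · by_cases hk' : k = j
      · subst hk'; exact (Prod.mk.injEq _ _ _ _).mp hfij |>.2
      · have : g k = f k := by subst hg; simp [Function.update, hk, hk']
        rw [← this]; exact hgk k

theorem stmt_11 {X : Type*} (r : X × X ≃ X × X)
    (hnd : Nondegenerate r) (hsf : SquareFree' r)
    (m : ℕ) (hm : 2 ≤ m) (x y : X)
    (h : Relation.EqvGen (Step (m := m) r) (fun _ => x) (fun _ => y)) :
    x = y := by
  have key : ∀ f g : Fin m → X, Relation.EqvGen (Step r) f g →
      (f = (fun _ => x) ↔ g = (fun _ => x)) := by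
    intro f g h
    induction h with
    | rel _ _ hstep => exact step_const_iff r hsf hstep x
    | refl _ => exact Iff.rfl
    | symm _ _ _ ih => exact ih.symm
    | trans _ _ _ _ _ ih1 ih2 => exact ih1.trans ih2
  have hc : (fun _ : Fin m => y) = (fun _ => x) := (key _ _ h).mp rfl
  exact (congrFun hc ⟨0, by omega⟩).symm
end

section
/- Let (X,r) be a square-free non-degenerate quadratic set and let O be an orbit of the group D_3(r) = ⟨r¹², r²³⟩ acting on X³. If O contains an element of the form (x,x,y) or (x,y,y) with x ≠ y, then |O| ≥ 3. -/
/-- One-step relation generating the orbits of `D_3(r) = ⟨r¹², r²³⟩` on `X³`. -/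
def DStep {X : Type*} (r : X × X ≃ X × X) (s t : X × X × X) : Prop :=
  t = r12 r s ∨ t = r23 r s

/-- The `D_3(r)`-orbit of a triple. -/
def D3Orbit {X : Type*} (r : X × X ≃ X × X) (p : X × X × X) : Set (X × X × X) :=
  {q | Relation.EqvGen (DStep r) p q}

lemma three_le_mk {α : Type*} {S : Set α} {a b c : α}
    (ha : a ∈ S) (hb : b ∈ S) (hc : c ∈ S)
    (hab : a ≠ b) (hac : a ≠ c) (hbc : b ≠ c) : 3 ≤ Cardinal.mk S := by
  have hinj : Function.Injective (![(⟨a, ha⟩ : S), ⟨b, hb⟩, ⟨c, hc⟩]) := by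
    intro i j hij
    fin_cases i <;> fin_cases j <;> simp_all [Subtype.ext_iff] <;>
      first | rfl | exact absurd hij (by tauto) | exact absurd hij.symm (by tauto)
  have hinj' : Function.Injective
      ((![(⟨a, ha⟩ : S), ⟨b, hb⟩, ⟨c, hc⟩]) ∘ ULift.down) :=
    hinj.comp ULift.down_injective
  calc (3 : Cardinal) = Cardinal.mk (ULift (Fin 3)) := by simp
    _ ≤ Cardinal.mk S := Cardinal.mk_le_of_injective hinj'

theorem stmt_12 {X : Type*} (r : X × X ≃ X × X)
    (hnd : Nondegenerate r) (hsf : SquareFree' r)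
    (p : X × X × X)
    (h : ∃ x y : X, x ≠ y ∧
      ((x, x, y) ∈ D3Orbit r p ∨ (x, y, y) ∈ D3Orbit r p)) :
    3 ≤ Cardinal.mk (D3Orbit r p) := by
  obtain ⟨x, y, hxy, h⟩ := h
  have fix1 : ∀ a b : X, (r (a, b)).1 = a → b = a := by
    intro a b hab
    have := (hnd.1 a).1 (show (r (a,b)).1 = (r (a,a)).1 by rw [hsf a]; exact hab)
    exact this
  have fix2 : ∀ a b : X, (r (a, b)).2 = b → a = b := by
    intro a b hab
    exact (hnd.2 b).1 (show (r (a,b)).2 = (r (b,b)).2 by rw [hsf b]; exact hab)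
  have step : ∀ t u : X × X × X, t ∈ D3Orbit r p → DStep r t u → u ∈ D3Orbit r p := by
    intro t u ht hd
    exact Relation.EqvGen.trans _ _ _ ht (Relation.EqvGen.rel _ _ hd)
  rcases h with h0 | h0
  · -- t0 = (x,x,y)
    set a := (r (x, y)).1 with ha
    set b := (r (x, y)).2 with hb
    have hax : a ≠ x := fun h' => hxy (fix1 x y h').symm
    have t1mem : (x, a, b) ∈ D3Orbit r p := by
      have := step _ _ h0 (Or.inr rfl)
      simpa [r23] using this
    set c := (r (x, a)).1 with hc
    set d := (r (x, a)).2 with hd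
    have hcx : c ≠ x := fun h' => hax (fix1 x a h')
    have t2mem : (c, d, b) ∈ D3Orbit r p := by
      have := step _ _ t1mem (Or.inl rfl)
      simpa [r12] using this
    refine three_le_mk h0 t1mem t2mem ?_ ?_ ?_
    · intro h'; exact hax (congrArg (fun t => t.2.1) h').symm
    · intro h'; exact hcx (congrArg (fun t => t.1) h').symm
    · intro h'; exact hcx (congrArg (fun t => t.1) h').symm
  · -- t0 = (x,y,y)
    set a := (r (x, y)).1 with ha
    set b := (r (x, y)).2 with hb
    have hby : b ≠ y := fun h' => hxy (fix2 x y h')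
    have t1mem : (a, b, y) ∈ D3Orbit r p := by
      have := step _ _ h0 (Or.inl rfl)
      simpa [r12] using this
    set c := (r (b, y)).1 with hc
    set d := (r (b, y)).2 with hd
    have hdy : d ≠ y := fun h' => hby (fix2 b y h')
    have t2mem : (a, c, d) ∈ D3Orbit r p := by
      have := step _ _ t1mem (Or.inr rfl)
      simpa [r23] using this
    refine three_le_mk h0 t1mem t2mem ?_ ?_ ?_
    · intro h'; exact hby (congrArg (fun t => t.2.1) h').symm
    · intro h'; exact hdy (congrArg (fun t => t.2.2) h').symm
    · intro h'; exact hdy (congrArg (fun t => t.2.2) h').symm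
end

section
/- Let (X,r) be a square-free non-degenerate quadratic set and let O be an orbit of D_3(r) = ⟨r¹², r²³⟩ on X³ that contains no triple with two equal neighbouring coordinates (i.e. O ∩ ((Δ₂×X) ∪ (X×Δ₂)) = ∅, where Δ₂ is the diagonal of X²). Then |O| ≥ 6. -/
/-- A square-free `D_3(r)`-orbit, i.e. one avoiding `(Δ₂ × X) ∪ (X × Δ₂)`,
has at least `6` elements. -/
theorem stmt_13 {X : Type*} (r : X × X ≃ X × X)
    (hnd : Nondegenerate r) (hsf : SquareFree' r)
    (p : X × X × X)
    (h : ∀ q ∈ D3Orbit r p, q.1 ≠ q.2.1 ∧ q.2.1 ≠ q.2.2) :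
    6 ≤ Cardinal.mk (D3Orbit r p) := by
  classical
  obtain ⟨a, b, c⟩ := p
  -- two key consequences of non-degeneracy + square-freeness
  have KL1 : ∀ x y : X, y ≠ x → (r (x, y)).1 ≠ x := by
    intro x y hyx hc
    have : (r (x, y)).1 = (r (x, x)).1 := by rw [hsf x]; exact hc
    exact hyx ((hnd.1 x).injective this)
  have KL2 : ∀ x y : X, x ≠ y → (r (x, y)).2 ≠ y := by
    intro x y hxy hc
    have : (r (x, y)).2 = (r (y, y)).2 := by rw [hsf y]; exact hc
    exact hxy ((hnd.2 y).injective this)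
  -- orbit closure under the two moves
  have s12 : ∀ q ∈ D3Orbit r (a, b, c), r12 r q ∈ D3Orbit r (a, b, c) := fun q hq =>
    Relation.EqvGen.trans _ _ _ hq (Relation.EqvGen.rel _ _ (Or.inl rfl))
  have s23 : ∀ q ∈ D3Orbit r (a, b, c), r23 r q ∈ D3Orbit r (a, b, c) := fun q hq =>
    Relation.EqvGen.trans _ _ _ hq (Relation.EqvGen.rel _ _ (Or.inr rfl))
  have m0 : (a, b, c) ∈ D3Orbit r (a, b, c) := Relation.EqvGen.refl _
  have m1 := s12 _ m0
  have m2 := s23 _ m0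
  have m3 := s12 _ m2
  have m4 := s23 _ m1
  have m5 := s12 _ m4
  have h0 := h _ m0
  have h1 := h _ m1
  have h2 := h _ m2
  have h4 := h _ m4
  simp only [r12, r23] at m1 m2 m3 m4 m5 h1 h2 h4
  -- abbreviations
  set A := (r (a, b)).1 with hA
  set B := (r (a, b)).2 with hB
  set B1 := (r (b, c)).1 with hB1
  set C1 := (r (b, c)).2 with hC1
  set A3 := (r (a, B1)).1 with hA3
  set B3 := (r (a, B1)).2 with hB3
  set B4 := (r (B, c)).1 with hB4
  set C2 := (r (B, c)).2 with hC2
  set A5 := (r (A, B4)).1 with hA5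
  set B5 := (r (A, B4)).2 with hB5
  -- the key inequalities on first/third coordinates
  have f1 : A ≠ a := KL1 a b (Ne.symm h0.1)
  have fB : B ≠ b := KL2 a b h0.1
  have f2 : C1 ≠ c := KL2 b c h0.2
  have f3 : A3 ≠ a := KL1 a B1 (Ne.symm h2.1)
  have f4 : C2 ≠ c := KL2 B c h1.2
  have f5 : C2 ≠ C1 := fun hc => fB ((hnd.2 c).injective hc)
  have f6 : A5 ≠ A := KL1 A B4 (Ne.symm h4.1)
  -- six elements of the orbit
  let e : Fin 6 → X × X × X :=
    ![(a, b, c), (A, B, c), (a, B1, C1), (A3, B3, C1), (A, B4, C2), (A5, B5, C2)]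
  have hmem : ∀ i, e i ∈ D3Orbit r (a, b, c) := by
    intro i
    fin_cases i <;> simp only [e, Matrix.cons_val_zero, Matrix.cons_val_one, Matrix.head_cons,
      Matrix.cons_val_two, Matrix.tail_cons, Matrix.cons_val_three, Matrix.cons_val_four] <;>
      first
        | exact m0
        | exact m1
        | exact m2
        | exact m3
        | exact m4
        | exact m5
  have hinj : Function.Injective e := by
    intro i j hij
    have hfst : (e i).1 = (e j).1 := by rw [hij]
    have htrd : (e i).2.2 = (e j).2.2 := by rw [hij]
    fin_cases i <;> fin_cases j <;>
      simp only [e, Matrix.cons_val_zero, Matrix.cons_val_one, Matrix.head_cons,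
        Matrix.cons_val_two, Matrix.tail_cons, Matrix.cons_val_three,
        Matrix.cons_val_four] at hfst htrd <;>
      first
        | rfl
        | (exact absurd hfst (Ne.symm f1))
        | (exact absurd hfst f1)
        | (exact absurd htrd (Ne.symm f2))
        | (exact absurd htrd f2)
        | (exact absurd hfst (Ne.symm f3))
        | (exact absurd hfst f3)
        | (exact absurd htrd (Ne.symm f4))
        | (exact absurd htrd f4)
        | (exact absurd htrd (Ne.symm f5))
        | (exact absurd htrd f5)
        | (exact absurd hfst (Ne.symm f6))
        | (exact absurd hfst f6)
  have hf : Function.Injective (fun i : Fin 6 => (⟨e i, hmem i⟩ : D3Orbit r (a, b, c))) := by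
    intro i j hij
    exact hinj (congrArg Subtype.val hij)
  have hg : Function.Injective
      (fun i : ULift.{u_1} (Fin 6) => (⟨e i.down, hmem i.down⟩ : D3Orbit r (a, b, c))) := by
    intro i j hij
    exact ULift.ext _ _ (hf hij)
  have hle := Cardinal.mk_le_of_injective hg
  simpa using hle
end

section
/- Let (X,r) be a self-distributive quadratic set, i.e. r(x,y) = (^x y, x) where ^x y = λ_x(y). If (X,r) is 2-cancellative then λ_x(x) = x for all x ∈ X (equivalently, (X,r) is square-free). -/
/-- 2-cancellativity for a (not necessarily involutive) map `r`: for every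
`k ≥ 1` less than the order of `r` (i.e. with `r^[k] ≠ id`),
`r^[k] (x, y) = (x, z)` implies `z = y` and `r^[k] (x, y) = (t, y)` implies `x = t`. -/
def TwoCancellative {X : Type*} (r : X × X → X × X) : Prop :=
  ∀ k : ℕ, 1 ≤ k → r^[k] ≠ id →
    (∀ x y z : X, r^[k] (x, y) = (x, z) → z = y) ∧
    (∀ x y t : X, r^[k] (x, y) = (t, y) → x = t)

/-- A self-distributive quadratic set `r (x, y) = (λ_x y, x)` which is
2-cancellative is square-free: `λ_x x = x`. -/
theorem stmt_15 {X : Type*} (lam : X → X → X)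
    (r : X × X → X × X) (hr : ∀ p : X × X, r p = (lam p.1 p.2, p.1))
    (hbij : Function.Bijective r) (hc : TwoCancellative r) :
    ∀ x : X, lam x x = x := by
  intro x
  by_cases h : r = id
  · have := hr (x, x)
    rw [h] at this
    simpa using (congrArg Prod.fst this).symm
  · have h1 : r^[1] ≠ id := by simpa using h
    have := (hc 1 le_rfl h1).2 x x (lam x x) (by simpa using hr (x, x))
    exact this.symm
end
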